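/- Let f : ℝⁿ → ℝ be C² satisfying quadratic growth with constant μ around a local minimum x̄ (with value f* and solution set S). For every μ♭ < μ and every λ♯ > λ_max(∇²f(x̄)) there is a neighborhood U of x̄ such that μ♭·dist(x,S) ≤ ‖∇f(x)‖ ≤ λ♯·dist(x,S) for all x ∈ U. -/

import Mathlib

/-!
Let `H = ∇²f(x̄)`. At a local minimum `H` is positive semidefinite, so `‖H‖` is its largest
eigenvalue and `‖H‖ < λ♯`; near `x̄` the Hessian stays within a small `ε` of `H`. For `x` near `x̄`
take a nearest point `s` of `closure S`, where still `∇f s = 0` and `f s = f*`. The mean value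
inequality on `[s, x]` gives `‖∇f x‖ ≤ (‖H‖ + ε) ‖x - s‖`, while Taylor's formula and the mean
value theorem along `[s, x]` give `⟪∇f x, x - s⟫ ≥ 2 (f x - f*) - 2ε ‖x - s‖²`, which quadratic
growth turns into `‖∇f x‖ ≥ (μ - 2ε) dist(x, S)`.
-/

open Metric Filter Topology
open scoped RealInnerProductSpace

theorem exists_eq_add_deriv_add_half_deriv2 {φ φ' φ'' : ℝ → ℝ}
    (hφ : ∀ t, HasDerivAt φ (φ' t) t) (hφ' : ∀ t, HasDerivAt φ' (φ'' t) t) :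
    ∃ ξ ∈ Set.Ioo (0 : ℝ) 1, φ 1 = φ 0 + φ' 0 + φ'' ξ / 2 := by
  set K := φ 1 - φ 0 - φ' 0
  -- Rolle on `[0, 1]` for `φ t - t φ'(0) - t² K`, then on `[0, η]` for its derivative.
  have hg : ∀ t, HasDerivAt (fun t => φ t - t * φ' 0 - t ^ 2 * K) (φ' t - φ' 0 - 2 * t * K) t :=
    fun t => (((hφ t).sub ((hasDerivAt_id' t).mul_const (φ' 0))).sub
        ((hasDerivAt_pow 2 t).mul_const K)).congr_deriv (by simp)
  obtain ⟨η, hη, hgη⟩ := exists_hasDerivAt_eq_zero one_pos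
    (fun t _ => (hg t).continuousAt.continuousWithinAt) (by ring) (fun t _ => hg t)
  have hh : ∀ t, HasDerivAt (fun t => φ' t - 2 * t * K) (φ'' t - 2 * K) t := fun t =>
    ((hφ' t).sub (((hasDerivAt_id' t).const_mul 2).mul_const K)).congr_deriv (by ring)
  obtain ⟨ξ, hξ, hhξ⟩ := exists_hasDerivAt_eq_zero hη.1
    (fun t _ => (hh t).continuousAt.continuousWithinAt) (by linarith) (fun t _ => hh t)
  exact ⟨ξ, ⟨hξ.1, hξ.2.trans hη.2⟩, by linarith⟩

theorem abs_inner_apply_self_sub_le {E : Type*} [NormedAddCommGroup E] [InnerProductSpace ℝ E]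
    {A B : E →L[ℝ] E} {ε : ℝ} (h : ‖A - B‖ ≤ ε) (v : E) :
    |⟪A v, v⟫ - ⟪B v, v⟫| ≤ ε * ‖v‖ ^ 2 :=
  calc |⟪A v, v⟫ - ⟪B v, v⟫| = |⟪(A - B) v, v⟫| := by
        rw [← inner_sub_left]; rfl
    _ ≤ ‖(A - B) v‖ * ‖v‖ := abs_real_inner_le_norm _ _
    _ ≤ ‖A - B‖ * ‖v‖ * ‖v‖ := by gcongr; exact (A - B).le_opNorm v
    _ ≤ ε * ‖v‖ ^ 2 := by rw [mul_assoc, ← sq]; gcongr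

theorem hasDerivAt_add_smul {F : Type*} [NormedAddCommGroup F] [NormedSpace ℝ F] (s v : F)
    (t : ℝ) : HasDerivAt (fun t : ℝ => s + t • v) v t :=
  ((hasDerivAt_id' t).smul_const v).const_add s |>.congr_deriv (one_smul ℝ v)

theorem dist_le_two_mul_dist_of_infDist_eq_dist {α : Type*} [PseudoMetricSpace α] {S : Set α}
    {x y s : α} (hy : y ∈ S) (hs : infDist x S = dist x s) : dist s y ≤ 2 * dist x y := by
  linarith [dist_triangle_left s y x, infDist_le_dist_of_mem (x := x) hy]

section Gradient

variable {E : Type*} [NormedAddCommGroup E] [InnerProductSpace ℝ E] [CompleteSpace E]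
  {f : E → ℝ}

theorem ContDiff.gradient {m n : WithTop ℕ∞} (hf : ContDiff ℝ n f) (hmn : m + 1 ≤ n) :
    ContDiff ℝ m (gradient f) :=
  (InnerProductSpace.toDual ℝ E).symm.contDiff.comp (hf.fderiv_right hmn)

theorem inner_fderiv_gradient_apply (x u v : E) :
    ⟪fderiv ℝ (gradient f) x u, v⟫ = fderiv ℝ (fderiv ℝ f) x u v := by
  rw [show gradient f = (InnerProductSpace.toDual ℝ E).symm ∘ fderiv ℝ f from rfl,
    LinearIsometryEquiv.comp_fderiv]
  exact InnerProductSpace.toDual_symm_apply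

theorem hasDerivAt_comp_add_smul {s v : E} {t : ℝ} (hf : DifferentiableAt ℝ f (s + t • v)) :
    HasDerivAt (fun t : ℝ => f (s + t • v)) ⟪gradient f (s + t • v), v⟫ t := by
  rw [inner_gradient_left]
  exact hf.hasFDerivAt.comp_hasDerivAt t (hasDerivAt_add_smul s v t)

theorem hasDerivAt_inner_gradient_comp_add_smul {s v : E} {t : ℝ}
    (hg : DifferentiableAt ℝ (gradient f) (s + t • v)) :
    HasDerivAt (fun t : ℝ => ⟪gradient f (s + t • v), v⟫)
      ⟪fderiv ℝ (gradient f) (s + t • v) v, v⟫ t := by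
  have hline := hg.hasFDerivAt.comp_hasDerivAt t (hasDerivAt_add_smul s v t)
  refine (hline.inner ℝ (hasDerivAt_const t v)).congr_deriv ?_
  simp

theorem exists_eq_add_inner_gradient_add_half_inner_fderiv_gradient
    (hf : Differentiable ℝ f) (hg : Differentiable ℝ (gradient f)) (s v : E) :
    ∃ ξ ∈ Set.Ioo (0 : ℝ) 1, f (s + v) =
      f s + ⟪gradient f s, v⟫ + ⟪fderiv ℝ (gradient f) (s + ξ • v) v, v⟫ / 2 := by
  simpa using exists_eq_add_deriv_add_half_deriv2 (fun t => hasDerivAt_comp_add_smul (hf _))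
    (fun t => hasDerivAt_inner_gradient_comp_add_smul (v := v) (hg _))

theorem exists_inner_gradient_sub_eq_inner_fderiv_gradient
    (hg : Differentiable ℝ (gradient f)) (s v : E) :
    ∃ η ∈ Set.Ioo (0 : ℝ) 1,
      ⟪gradient f (s + v) - gradient f s, v⟫ = ⟪fderiv ℝ (gradient f) (s + η • v) v, v⟫ := by
  obtain ⟨η, hη, h⟩ := exists_hasDerivAt_eq_slope _ _ one_pos
    (fun t _ => (hasDerivAt_inner_gradient_comp_add_smul (hg _)).continuousAt.continuousWithinAt)
    (fun t _ => hasDerivAt_inner_gradient_comp_add_smul (v := v) (hg _))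
  exact ⟨η, hη, by simpa [inner_sub_left] using h.symm⟩

theorem IsLocalMin.gradient_eq_zero {x : E} (h : IsLocalMin f x) : gradient f x = 0 := by
  simp [gradient, h.fderiv_eq_zero]

theorem closure_setOf_isLocalMin_subset (hf : Continuous f) (hg : Continuous (gradient f))
    (c : ℝ) : closure {y | IsLocalMin f y ∧ f y = c} ⊆ {y | gradient f y = 0 ∧ f y = c} :=
  closure_minimal (fun _ hy => ⟨hy.1.gradient_eq_zero, hy.2⟩)
    ((isClosed_eq hg continuous_const).inter (isClosed_eq hf continuous_const))

theorem IsLocalMin.isPositive_fderiv_gradient {x : E} (hf : ContDiff ℝ 2 f) (hx : IsLocalMin f x) :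
    (fderiv ℝ (gradient f) x).IsPositive := by
  have hg : ContDiff ℝ 1 (gradient f) := hf.gradient (by norm_num)
  refine (ContinuousLinearMap.isPositive_iff _).2 ⟨fun u v => ?_, fun v => ?_⟩
  · rw [← real_inner_comm u, ContinuousLinearMap.coe_coe,
      inner_fderiv_gradient_apply, inner_fderiv_gradient_apply,
      (hf.contDiffAt.isSymmSndFDerivAt (by simp)).eq]
  -- Otherwise `f` decreases along a short segment in the direction `v`, by Taylor's formula.
  by_contra! hneg
  have hcont : Continuous fun y => ⟪fderiv ℝ (gradient f) y v, v⟫ := by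
    have := hg.continuous_fderiv one_ne_zero
    fun_prop
  obtain ⟨r, hr, hball⟩ := Metric.eventually_nhds_iff_ball.mp
    ((hcont.continuousAt.eventually_lt continuousAt_const hneg).and hx)
  have hline : Tendsto (fun t : ℝ => x + t • v) (𝓝 0) (𝓝 x) := by
    have : Continuous fun t : ℝ => x + t • v := by fun_prop
    simpa using this.tendsto 0
  obtain ⟨t, htr, ht : t ≠ 0⟩ := ((hline.eventually (ball_mem_nhds x hr)).filter_mono
    nhdsWithin_le_nhds |>.and (self_mem_nhdsWithin (s := {0}ᶜ))).exists
  obtain ⟨ξ, hξ, hTaylor⟩ :=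
    exists_eq_add_inner_gradient_add_half_inner_fderiv_gradient (hf.differentiable (by simp))
      (hg.differentiable one_ne_zero) x (t • v)
  have hξr : x + ξ • t • v ∈ ball x r :=
    (convex_ball x r).add_smul_mem (mem_ball_self hr) htr ⟨hξ.1.le, hξ.2.le⟩
  have hquad : ⟪fderiv ℝ (gradient f) (x + ξ • t • v) (t • v), t • v⟫ =
      t ^ 2 * ⟪fderiv ℝ (gradient f) (x + ξ • t • v) v, v⟫ := by
    simp only [map_smul, real_inner_smul_left, real_inner_smul_right]
    ring
  rw [hx.gradient_eq_zero, inner_zero_left, hquad] at hTaylor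
  have ht2 : 0 < t ^ 2 := by positivity
  nlinarith [(hball _ hξr).1, (hball _ htr).2]

theorem two_mul_sub_le_inner_gradient_sub (hf : Differentiable ℝ f)
    (hg : Differentiable ℝ (gradient f)) {U : Set E} (hU : Convex ℝ U) {A : E →L[ℝ] E} {ε : ℝ}
    (hA : ∀ y ∈ U, ‖fderiv ℝ (gradient f) y - A‖ ≤ ε) {s x : E} (hs : s ∈ U) (hx : x ∈ U) :
    2 * (f x - f s - ⟪gradient f s, x - s⟫) - 2 * ε * ‖x - s‖ ^ 2 ≤
      ⟪gradient f x - gradient f s, x - s⟫ := by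
  have hclose : ∀ t ∈ Set.Ioo (0 : ℝ) 1,
      |⟪fderiv ℝ (gradient f) (s + t • (x - s)) (x - s), x - s⟫ - ⟪A (x - s), x - s⟫| ≤
        ε * ‖x - s‖ ^ 2 := fun t ht =>
    abs_inner_apply_self_sub_le
      (hA _ (hU.add_smul_mem hs (by rwa [add_sub_cancel]) ⟨ht.1.le, ht.2.le⟩)) _
  obtain ⟨ξ, hξ, hTaylor⟩ :=
    exists_eq_add_inner_gradient_add_half_inner_fderiv_gradient hf hg s (x - s)
  obtain ⟨η, hη, hMVT⟩ := exists_inner_gradient_sub_eq_inner_fderiv_gradient hg s (x - s)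
  rw [add_sub_cancel] at hTaylor hMVT
  linarith [abs_le.mp (hclose ξ hξ), abs_le.mp (hclose η hη)]

theorem norm_gradient_sub_le (hg : Differentiable ℝ (gradient f)) {U : Set E} (hU : Convex ℝ U)
    {A : E →L[ℝ] E} {ε : ℝ} (hA : ∀ y ∈ U, ‖fderiv ℝ (gradient f) y - A‖ ≤ ε) {s x : E}
    (hs : s ∈ U) (hx : x ∈ U) : ‖gradient f x - gradient f s‖ ≤ (‖A‖ + ε) * ‖x - s‖ :=
  hU.norm_image_sub_le_of_norm_fderiv_le (fun y _ => hg y)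
    (fun y hy => (norm_le_norm_add_norm_sub' _ A).trans (by gcongr; exact hA y hy)) hs hx

end Gradient

theorem ContinuousLinearMap.IsPositive.norm_lt_of_inner_lt {E : Type*} [NormedAddCommGroup E]
    [InnerProductSpace ℝ E] [FiniteDimensional ℝ E] [Nontrivial E] {T : E →L[ℝ] E}
    (hT : T.IsPositive) {c : ℝ} (hc : ∀ v ≠ 0, ⟪v, T v⟫ < c * ‖v‖ ^ 2) : ‖T‖ < c := by
  obtain ⟨u, hu, hmax⟩ := (isCompact_sphere (0 : E) 1).exists_isMaxOn
    (NormedSpace.sphere_nonempty.mpr zero_le_one) T.reApplyInnerSelf_continuous.continuousOn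
  have hu1 : ‖u‖ = 1 := by simpa using hu
  have hrayleigh : ∀ x, |T.rayleighQuotient x| ≤ T.reApplyInnerSelf u := by
    intro x
    rcases eq_or_ne x 0 with rfl | hx
    · simpa using hT.2 u
    have hx' : ‖x‖⁻¹ • x ∈ sphere (0 : E) 1 := by simp [norm_smul, hx]
    rw [← T.rayleigh_smul x (inv_ne_zero (norm_ne_zero_iff.mpr hx)),
      abs_of_nonneg (div_nonneg (hT.2 _) (sq_nonneg _)), mem_sphere_zero_iff_norm.mp hx',
      one_pow, div_one]
    exact hmax hx'
  calc ‖T‖ = ⨆ x, |T.rayleighQuotient x| := T.norm_eq_iSup_rayleighQuotient hT.isSymmetric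
    _ ≤ T.reApplyInnerSelf u := ciSup_le hrayleigh
    _ < c := by
      simpa [hu1, real_inner_comm, T.reApplyInnerSelf_apply] using hc u (by rintro rfl; simp at hu1)

theorem qg_implies_eb_general {n : ℕ}
    (f : EuclideanSpace ℝ (Fin n) → ℝ) (xb : EuclideanSpace ℝ (Fin n))
    (hf : ContDiff ℝ 2 f) (hmin : IsLocalMin f xb)
    (μ : ℝ)
    (S : Set (EuclideanSpace ℝ (Fin n)))
    (hS : S = {y | IsLocalMin f y ∧ f y = f xb})
    (hQG : ∀ᶠ x in 𝓝 xb, (μ / 2) * (Metric.infDist x S) ^ 2 ≤ f x - f xb) :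
    ∀ μflat < μ, ∀ lamsharp : ℝ,
      (∀ v : EuclideanSpace ℝ (Fin n), v ≠ 0 →
        ⟪v, fderiv ℝ (gradient f) xb v⟫ < lamsharp * ‖v‖ ^ 2) →
      ∀ᶠ x in 𝓝 xb,
        μflat * Metric.infDist x S ≤ ‖gradient f x‖ ∧
        ‖gradient f x‖ ≤ lamsharp * Metric.infDist x S := by
  intro μflat hμflat lamsharp hlam
  have hxbS : xb ∈ S := hS ▸ ⟨hmin, rfl⟩
  rcases subsingleton_or_nontrivial (EuclideanSpace ℝ (Fin n)) with hE | hE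
  · refine Eventually.of_forall fun x => ?_
    rw [Subsingleton.elim x xb, infDist_zero_of_mem hxbS, Subsingleton.elim (gradient f xb) 0]
    simp
  have hfd : Differentiable ℝ f := hf.differentiable (by simp)
  have hg : ContDiff ℝ 1 (gradient f) := hf.gradient (by norm_num)
  have hgd : Differentiable ℝ (gradient f) := hg.differentiable one_ne_zero
  set H := fderiv ℝ (gradient f) xb
  have hH : ‖H‖ < lamsharp := (hmin.isPositive_fderiv_gradient hf).norm_lt_of_inner_lt hlam
  set ε := min (lamsharp - ‖H‖) ((μ - μflat) / 2)
  have hε : 0 < ε := lt_min (by linarith) (by linarith)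
  obtain ⟨r, hr, hball⟩ := Metric.eventually_nhds_iff_ball.mp
    (hQG.and ((hg.continuous_fderiv one_ne_zero).continuousAt.eventually (ball_mem_nhds H hε)))
  have hHU : ∀ y ∈ ball xb r, ‖fderiv ℝ (gradient f) y - H‖ ≤ ε := fun y hy =>
    (mem_ball_iff_norm.mp (hball y hy).2).le
  filter_upwards [ball_mem_nhds xb (half_pos hr)] with x hx
  obtain ⟨s, hs, hxs⟩ := isClosed_closure.exists_infDist_eq_dist ⟨xb, subset_closure hxbS⟩ x
  rw [infDist_closure] at hxs
  have hs0 : gradient f s = 0 ∧ f s = f xb :=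
    closure_setOf_isLocalMin_subset hfd.continuous hgd.continuous _ (hS ▸ hs)
  have hxr : x ∈ ball xb r := ball_subset_ball (half_le_self hr.le) hx
  have hsr : s ∈ ball xb r := mem_ball.2 <| by
    linarith [dist_le_two_mul_dist_of_infDist_eq_dist hxbS hxs, mem_ball.1 hx]
  rw [dist_eq_norm] at hxs
  have hlower := two_mul_sub_le_inner_gradient_sub hfd hgd (convex_ball xb r) hHU hsr hxr
  have hupper := norm_gradient_sub_le hgd (convex_ball xb r) hHU hsr hxr
  rw [hs0.1, hs0.2, inner_zero_left, sub_zero, sub_zero, ← hxs] at hlower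
  rw [hs0.1, sub_zero, ← hxs] at hupper
  have hQGx := (hball x hxr).1
  have hCS : ⟪gradient f x, x - s⟫ ≤ ‖gradient f x‖ * infDist x S :=
    hxs ▸ real_inner_le_norm _ _
  have hεμ : ε ≤ (μ - μflat) / 2 := min_le_right _ _
  have hεlam : ε ≤ lamsharp - ‖H‖ := min_le_left _ _
  constructor
  · rcases (infDist_nonneg (x := x) (s := S)).eq_or_lt with hd | hd
    · simp [← hd]
    refine le_of_mul_le_mul_right ?_ hd
    nlinarith
  · exact hupper.trans (mul_le_mul_of_nonneg_right (by linarith) infDist_nonneg)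

/-- Quadratic growth implies a two-sided bound: the gradient norm is commensurate with the
distance to the solution set, with constants `μ♭ < μ` and `λ♯ > λ_max(∇²f(xb))`. -/
theorem qg_implies_eb {n : ℕ}
    (f : EuclideanSpace ℝ (Fin n) → ℝ) (xb : EuclideanSpace ℝ (Fin n))
    (hf : ContDiff ℝ 2 f) (hmin : IsLocalMin f xb)
    (μ : ℝ) (hμ : 0 < μ)
    (S : Set (EuclideanSpace ℝ (Fin n)))
    (hS : S = {y | IsLocalMin f y ∧ f y = f xb})
    (hQG : ∀ᶠ x in 𝓝 xb, (μ / 2) * (Metric.infDist x S) ^ 2 ≤ f x - f xb) :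
    ∀ μflat < μ, ∀ lamsharp : ℝ,
      (∀ v : EuclideanSpace ℝ (Fin n), v ≠ 0 →
        ⟪v, fderiv ℝ (gradient f) xb v⟫ < lamsharp * ‖v‖ ^ 2) →
      ∀ᶠ x in 𝓝 xb,
        μflat * Metric.infDist x S ≤ ‖gradient f x‖ ∧
        ‖gradient f x‖ ≤ lamsharp * Metric.infDist x S :=
  qg_implies_eb_general f xb hf hmin μ S hS hQG
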